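/- For any a > 0, ∫_0^∞ e^{-s²} I₁(a s)² s ds = (1/2) e^{a²/2} I₁(a²/2), where I₁ is the modified Bessel function of the first kind of order 1. -/

import Mathlib

open Real MeasureTheory

/-- The modified Bessel function of the first kind of order 1,
`I₁(x) = ∑_{m=0}^∞ (1/(m!(m+1)!)) (x/2)^{2m+1}`. -/
noncomputable def besselI1 (x : ℝ) : ℝ :=
  ∑' m : ℕ, (1 / (Nat.factorial m * Nat.factorial (m + 1)) : ℝ) * (x / 2) ^ (2 * m + 1)

/-!
Both sides are power series in `x = (a/2)^2` with coefficient `C(2k+2, k) / (k+1)!` at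
`x^(k+1)/2`. On the left, Vandermonde's identity gives
`I₁(y)^2 = ∑ C(2k+2, k) / (k+1)!^2 (y/2)^(2k+2)`, and integrating termwise, the Gaussian
moment `∫₀^∞ s^(2k+3) e^(-s^2) ds = (k+1)!/2` cancels one factor `(k+1)!`. On the right, the
coefficient of `x^(k+1)` in `e^(2x) I₁(2x)` times `(k+1)!` is the coefficient of `X^k` in
`((1+X)^2)^(k+1) = (X^2 + (1+2X))^(k+1)`, expanded by the binomial theorem in `X^2`.
-/

open Polynomial Finset Nat

noncomputable def besselI1Coeff (m : ℕ) : ℝ := 1 / (m ! * (m + 1)!)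

theorem choose_two_mul_eq_sum (n k : ℕ) :
    (2 * n).choose k = ∑ j ∈ range (n + 1),
      if 2 * j ≤ k then n.choose j * (n - j).choose (k - 2 * j) * 2 ^ (k - 2 * j) else 0 := by
  have hsq : (1 + X : ℕ[X]) ^ 2 = X ^ 2 + (1 + X).comp (C 2 * X) := by
    simp only [add_comp, one_comp, X_comp, C_ofNat]
    ring
  have hcoeff := coeff_one_add_X_pow ℕ (2 * n) k
  rw [Nat.cast_id] at hcoeff
  rw [← hcoeff, pow_mul, hsq, add_pow, finsetSum_coeff]
  refine sum_congr rfl fun j _ => ?_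
  rw [← pow_mul, ← pow_comp, mul_comm (X ^ _), mul_right_comm, coeff_mul_X_pow',
    coeff_mul_natCast]
  split_ifs
  · rw [comp_C_mul_X_coeff, coeff_one_add_X_pow, Nat.cast_id, Nat.cast_id]
    ring
  · simp

theorem sum_antidiagonal_besselI1Coeff_mul (k : ℕ) :
    ∑ p ∈ antidiagonal k, besselI1Coeff p.1 * besselI1Coeff p.2
      = (2 * k + 2).choose k / (k + 1)! ^ 2 := by
  have hvandermonde : ((2 * k + 2).choose k : ℝ)
      = ∑ p ∈ antidiagonal k, ((k + 1).choose p.1 * (k + 1).choose p.2 : ℝ) := by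
    rw [show 2 * k + 2 = (k + 1) + (k + 1) by ring, Nat.add_choose_eq]
    push_cast
    rfl
  rw [hvandermonde, eq_div_iff (by positivity), sum_mul]
  refine sum_congr rfl fun ⟨i, j⟩ hij => ?_
  obtain rfl : i + j = k := mem_antidiagonal.mp hij
  rw [cast_choose ℝ (by omega : i ≤ i + j + 1), cast_choose ℝ (by omega : j ≤ i + j + 1),
    show i + j + 1 - i = j + 1 by omega, show i + j + 1 - j = i + 1 by omega]
  simp only [besselI1Coeff]
  field_simp

theorem sum_range_two_pow_div_factorial_mul_besselI1Coeff (k : ℕ) :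
    ∑ m ∈ range (k / 2 + 1), 2 ^ (k - 2 * m) / (k - 2 * m)! * besselI1Coeff m
      = (2 * k + 2).choose k / (k + 1)! := by
  have hsum : ((2 * k + 2).choose k : ℝ) = ∑ m ∈ range (k / 2 + 1),
      ((k + 1).choose m * (k + 1 - m).choose (k - 2 * m) * 2 ^ (k - 2 * m) : ℝ) := by
    have hfilter : (range (k + 2)).filter (fun m => 2 * m ≤ k) = range (k / 2 + 1) := by
      ext m
      simp only [mem_filter, mem_range]
      omega
    rw [← hfilter, sum_filter, show 2 * k + 2 = 2 * (k + 1) by ring, choose_two_mul_eq_sum]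
    push_cast [apply_ite (Nat.cast : ℕ → ℝ)]
    rfl
  rw [hsum, eq_div_iff (by positivity), sum_mul]
  refine sum_congr rfl fun m hm => ?_
  have hmk : 2 * m ≤ k := by
    rw [mem_range] at hm
    omega
  rw [cast_choose ℝ (by omega : m ≤ k + 1), cast_choose ℝ (by omega : k - 2 * m ≤ k + 1 - m),
    show k + 1 - m - (k - 2 * m) = m + 1 by omega]
  simp only [besselI1Coeff]
  field_simp

def sigmaFinHalfEquivProd : (Σ k : ℕ, Fin (k / 2 + 1)) ≃ ℕ × ℕ where
  toFun p := (p.1 - 2 * p.2, p.2)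
  invFun q := ⟨q.1 + 2 * q.2, ⟨q.2, by omega⟩⟩
  left_inv := by
    rintro ⟨k, m⟩
    have hk : k - 2 * m + 2 * m = k := by omega
    exact Sigma.ext hk ((Fin.heq_ext_iff (congrArg (· / 2 + 1) hk)).mpr rfl)
  right_inv := by
    rintro ⟨i, m⟩
    simp

theorem hasSum_sum_range_half_mul_of_summable_norm {R : Type*} [NormedRing R] [CompleteSpace R]
    {f g : ℕ → R}
    (hf : Summable fun i => ‖f i‖) (hg : Summable fun m => ‖g m‖) :
    HasSum (fun k => ∑ m ∈ range (k / 2 + 1), f (k - 2 * m) * g m)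
      ((∑' i, f i) * ∑' m, g m) := by
  have hprod := (summable_mul_of_summable_norm hf hg).hasSum
  rw [← tsum_mul_tsum_of_summable_norm hf hg] at hprod
  refine (sigmaFinHalfEquivProd.hasSum_iff.mpr hprod).sigma fun k => ?_
  rw [← Fin.sum_univ_eq_sum_range]
  exact hasSum_fintype _

theorem besselI1_eq_tsum (y : ℝ) : besselI1 y = ∑' m, besselI1Coeff m * (y / 2) ^ (2 * m + 1) :=
  rfl

theorem summable_norm_besselI1Coeff_mul_pow (z : ℝ) :
    Summable fun m => ‖besselI1Coeff m * z ^ (2 * m + 1)‖ := by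
  have hbound : ∀ m, ‖besselI1Coeff m * z ^ (2 * m + 1)‖ ≤ |z| * ((z ^ 2) ^ m / m !) := by
    intro m
    have hfac : (1 : ℝ) ≤ (m + 1)! := by exact_mod_cast (m + 1).factorial_pos
    calc ‖besselI1Coeff m * z ^ (2 * m + 1)‖ = |z| * ((z ^ 2) ^ m / (m ! * (m + 1)!)) := by
          rw [norm_mul, norm_pow, Real.norm_eq_abs, Real.norm_eq_abs, besselI1Coeff,
            abs_of_pos (by positivity), pow_succ, pow_mul, sq_abs]
          ring
      _ ≤ |z| * ((z ^ 2) ^ m / m !) := by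
          gcongr
          exact le_mul_of_one_le_right (by positivity) hfac
  exact .of_nonneg_of_le (fun _ => norm_nonneg _) hbound
    ((Real.summable_pow_div_factorial _).mul_left _)

theorem besselI1_sq_eq_tsum (y : ℝ) :
    besselI1 y ^ 2 = ∑' k, (2 * k + 2).choose k / (k + 1)! ^ 2 * (y / 2) ^ (2 * k + 2) := by
  have h := summable_norm_besselI1Coeff_mul_pow (y / 2)
  rw [sq, besselI1_eq_tsum, tsum_mul_tsum_eq_tsum_sum_antidiagonal_of_summable_norm h h]
  refine tsum_congr fun k => ?_
  rw [← sum_antidiagonal_besselI1Coeff_mul, sum_mul]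
  refine sum_congr rfl fun ⟨i, j⟩ hij => ?_
  obtain rfl : i + j = k := mem_antidiagonal.mp hij
  ring

theorem hasSum_exp_mul_besselI1 (x : ℝ) :
    HasSum (fun k => (2 * k + 2).choose k / (k + 1)! * x ^ (k + 1))
      (exp (2 * x) * besselI1 (2 * x)) := by
  have hexp : Summable fun i => ‖(2 * x) ^ i / (i ! : ℝ)‖ := by
    simpa [abs_mul] using Real.summable_pow_div_factorial |2 * x|
  have h := hasSum_sum_range_half_mul_of_summable_norm hexp
    (summable_norm_besselI1Coeff_mul_pow x)
  rw [Real.exp_eq_exp_ℝ, NormedSpace.exp_eq_tsum_div, besselI1_eq_tsum,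
    mul_div_cancel_left₀ x two_ne_zero]
  suffices hterm : (fun k => (2 * k + 2).choose k / (k + 1)! * x ^ (k + 1) : ℕ → ℝ)
      = fun k => ∑ m ∈ range (k / 2 + 1), (2 * x) ^ (k - 2 * m) / (k - 2 * m)!
        * (besselI1Coeff m * x ^ (2 * m + 1)) by
    rw [hterm]
    exact h
  ext k
  rw [← sum_range_two_pow_div_factorial_mul_besselI1Coeff, sum_mul]
  refine sum_congr rfl fun m hm => ?_
  have hmk : 2 * m ≤ k := by
    rw [mem_range] at hm
    omega
  rw [show k + 1 = (k - 2 * m) + (2 * m + 1) by omega, pow_add, mul_pow]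
  ring

theorem integral_Ioi_pow_mul_exp_neg_sq (n : ℕ) :
    ∫ s in Set.Ioi (0 : ℝ), s ^ (2 * n + 1) * exp (-s ^ 2) = n ! / 2 := by
  have h := integral_rpow_mul_exp_neg_rpow (p := 2) (q := ((2 * n + 1 : ℕ) : ℝ)) two_pos
    (neg_one_lt_zero.trans_le (Nat.cast_nonneg _))
  simp only [Real.rpow_natCast, Real.rpow_two] at h
  rw [h, show (((2 * n + 1 : ℕ) : ℝ) + 1) / 2 = n + 1 by push_cast; ring,
    Real.Gamma_nat_eq_factorial]
  ring

theorem integrableOn_Ioi_pow_mul_exp_neg_sq (n : ℕ) :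
    IntegrableOn (fun s : ℝ => s ^ n * exp (-s ^ 2)) (Set.Ioi 0) := by
  simpa using integrableOn_rpow_mul_exp_neg_mul_sq (b := 1) one_pos
    (s := (n : ℝ)) (neg_one_lt_zero.trans_le n.cast_nonneg)

theorem hasSum_integral_of_nonneg {α ι : Type*} [MeasurableSpace α] [Countable ι]
    {μ : Measure α} {F : ι → α → ℝ} (hF_int : ∀ i, Integrable (F i) μ)
    (hF_nonneg : ∀ i, 0 ≤ᵐ[μ] F i) (hF_sum : Summable fun i => ∫ a, F i a ∂μ) :
    HasSum (fun i => ∫ a, F i a ∂μ) (∫ a, ∑' i, F i a ∂μ) :=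
  hasSum_integral_of_summable_integral_norm hF_int <| hF_sum.congr fun i =>
    (integral_congr_ae <| (hF_nonneg i).mono fun _ ha => Real.norm_of_nonneg ha).symm

theorem exp_neg_sq_mul_besselI1_sq_mul_eq_tsum (a s : ℝ) :
    exp (-s ^ 2) * besselI1 (a * s) ^ 2 * s = ∑' k, (2 * k + 2).choose k / (k + 1)! ^ 2
      * ((a / 2) ^ 2) ^ (k + 1) * (s ^ (2 * (k + 1) + 1) * exp (-s ^ 2)) := by
  rw [besselI1_sq_eq_tsum, ← tsum_mul_left, ← tsum_mul_right]
  refine tsum_congr fun k => ?_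
  have hpow : (a / 2) ^ (2 * k + 2) = ((a / 2) ^ 2) ^ (k + 1) := by
    rw [← pow_mul, mul_add, mul_one]
  rw [mul_div_right_comm, mul_pow, hpow]
  ring

theorem stmt3_general (a : ℝ) :
    ∫ s in Set.Ioi (0 : ℝ), Real.exp (-s ^ 2) * besselI1 (a * s) ^ 2 * s
      = (1 / 2) * Real.exp (a ^ 2 / 2) * besselI1 (a ^ 2 / 2) := by
  let F : ℕ → ℝ → ℝ := fun k s => (2 * k + 2).choose k / (k + 1)! ^ 2
    * ((a / 2) ^ 2) ^ (k + 1) * (s ^ (2 * (k + 1) + 1) * exp (-s ^ 2))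
  have hF_int : ∀ k, ∫ s in Set.Ioi 0, F k s
      = 1 / 2 * ((2 * k + 2).choose k / (k + 1)! * ((a / 2) ^ 2) ^ (k + 1)) := by
    intro k
    rw [integral_const_mul, integral_Ioi_pow_mul_exp_neg_sq]
    field_simp
  have hrhs := (hasSum_exp_mul_besselI1 ((a / 2) ^ 2)).mul_left (1 / 2)
  simp_rw [← hF_int] at hrhs
  have hlhs := hasSum_integral_of_nonneg (μ := volume.restrict (Set.Ioi 0)) (F := F)
    (fun _ => (integrableOn_Ioi_pow_mul_exp_neg_sq _).const_mul _)
    (fun _ => ae_restrict_of_forall_mem measurableSet_Ioi fun s (hs : 0 < s) => by positivity)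
    hrhs.summable
  have hintegrand : (fun s => exp (-s ^ 2) * besselI1 (a * s) ^ 2 * s) = fun s => ∑' k, F k s :=
    funext (exp_neg_sq_mul_besselI1_sq_mul_eq_tsum a)
  rw [hintegrand, hlhs.unique hrhs, show a ^ 2 / 2 = 2 * (a / 2) ^ 2 by ring]
  ring

theorem stmt3 (a : ℝ) (ha : 0 < a) :
    ∫ s in Set.Ioi (0 : ℝ), Real.exp (-s ^ 2) * besselI1 (a * s) ^ 2 * s
      = (1 / 2) * Real.exp (a ^ 2 / 2) * besselI1 (a ^ 2 / 2) :=
  stmt3_general a
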